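/- arXiv:1801.09812 — 2 statements merged into one kernel-verified Lean document; each statement's English description precedes it below -/
import Mathlib

section
/- Let s : ℕ → ℝ be a sequence with s i ≠ 0 for every i, let t₀, t̂₀, k be real numbers, and define t i = t₀ + k · s i. Define the estimated time t̂ at step i+1 by t̂(i+1) = t̂₀ + ((t i − t̂₀)/s i) · s(i+1). Then for every i, the estimation error satisfies t̂(i+1) − t(i+1) = (t̂₀ − t₀) · (1 − s(i+1)/s i). -/
theorem stmt_0 (s : ℕ → ℝ) (hs : ∀ i, s i ≠ 0) (t₀ tHat₀ k : ℝ)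
    (t : ℕ → ℝ) (ht : ∀ i, t i = t₀ + k * s i)
    (tHat : ℕ → ℝ) (htHat : ∀ i, tHat (i + 1) = tHat₀ + ((t i - tHat₀) / s i) * s (i + 1)) :
    ∀ i, tHat (i + 1) - t (i + 1) = (tHat₀ - t₀) * (1 - s (i + 1) / s i) := by
  intro i
  rw [htHat, ht, ht]
  field_simp [hs i]
  ring
end

section
/- Let c > 0 and d > 0 be real numbers and define the arithmetic sequence s i = c + i·d for i ∈ ℕ. Let t₀, t̂₀, k be real numbers, define t i = t₀ + k · s i and t̂(i+1) = t̂₀ + ((t i − t̂₀)/s i) · s(i+1). Then the estimation error t̂(i+1) − t(i+1) tends to 0 as i → ∞. -/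
theorem stmt_2 (c d : ℝ) (hc : 0 < c) (hd : 0 < d)
    (s : ℕ → ℝ) (hs : ∀ i, s i = c + i * d)
    (t₀ tHat₀ k : ℝ)
    (t : ℕ → ℝ) (ht : ∀ i, t i = t₀ + k * s i)
    (tHat : ℕ → ℝ) (htHat : ∀ i, tHat (i + 1) = tHat₀ + ((t i - tHat₀) / s i) * s (i + 1)) :
    Filter.Tendsto (fun i => tHat (i + 1) - t (i + 1)) Filter.atTop (nhds 0) := by
  have hspos : ∀ i : ℕ, 0 < s i := by
    intro i; rw [hs]; positivity
  have key : ∀ i : ℕ, tHat (i + 1) - t (i + 1) = (t₀ - tHat₀) * d / s i := by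
    intro i
    have hne : s i ≠ 0 := (hspos i).ne'
    rw [htHat, ht, ht, hs (i+1), hs i]
    push_cast
    field_simp
    ring
  simp only [key]
  have h1 : Filter.Tendsto (fun i : ℕ => s i) Filter.atTop Filter.atTop := by
    simp only [hs]
    apply Filter.tendsto_atTop_add_const_left
    exact (tendsto_natCast_atTop_atTop (R := ℝ)).atTop_mul_const hd
  have h2 : Filter.Tendsto (fun i : ℕ => (t₀ - tHat₀) * d / s i) Filter.atTop (nhds 0) := by
    simpa using Filter.Tendsto.const_div_atTop h1 ((t₀ - tHat₀) * d)
  exact h2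
end
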